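/- arXiv:1309.7018 — 3 statements merged into one kernel-verified Lean document; each statement's English description precedes it below -/
import Mathlib

section
/- In the matrix setup below, the following identity of S×S matrices over F holds: I − φ(Q) = −D^{−1}·(I − P·Q·P)·J. -/
/-!
Let `E` be the diagonal idempotent supported on `T`. Since `D = 1` on `T` and the rows of `J`
indexed by `T` are `-eᵢ`, we have `D₀ = D - E`, `J₀ = J + E`, `E * J = -E`, hence
`Q = D * J + E`. Conjugation by `P` fixes `D` and `E`, and `P * J * P` is the inverse of `J`,
so `P * Q * P * J = D - E`; moreover `φ` sends `D` to `D⁻¹` and fixes `J` and `E`. Both sides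
of the identity are therefore `1 - D⁻¹ * J - E`, a computation valid in any ring.
-/

open scoped Classical

open Matrix

section Ring

variable {A : Type*} [Ring A] {P D D' J E : A}

theorem sub_mul_add_eq_mul_add (hDE : D * E = E) (hEE : E * E = E) (hEJ : E * J = -E) :
    (D - E) * (J + E) = D * J + E := by
  rw [sub_mul, mul_add, mul_add, hDE, hEE, hEJ]
  abel

theorem conj_mul_add_mul_eq_sub (hPP : P * P = 1) (hPDP : P * D * P = D) (hPEP : P * E * P = E)
    (hJ : P * J * P * J = 1) (hEJ : E * J = -E) :
    P * (D * J + E) * P * J = D - E :=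
  calc P * (D * J + E) * P * J = (P * D * P) * (P * J * P * J) + P * E * P * J := by
        simp only [mul_add, add_mul, mul_assoc, ← mul_assoc P P, hPP, one_mul]
    _ = D - E := by rw [hPDP, hJ, hPEP, hEJ, mul_one, sub_eq_add_neg]

theorem one_sub_map_eq_neg_mul_one_sub_conj_mul (f : A →+* A) (hPP : P * P = 1)
    (hPDP : P * D * P = D) (hPEP : P * E * P = E) (hJ : P * J * P * J = 1) (hD' : D' * D = 1)
    (hDE : D * E = E) (hEJ : E * J = -E) (hfD : f D = D') (hfE : f E = E) (hfJ : f J = J) :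
    1 - f (D * J + E) = -(D' * (1 - P * (D * J + E) * P) * J) := by
  have hD'E : D' * E = E :=
    calc D' * E = D' * D * E := by rw [mul_assoc, hDE]
      _ = E := by rw [hD', one_mul]
  calc 1 - f (D * J + E) = 1 - (D' * J + E) := by rw [map_add, map_mul, hfD, hfJ, hfE]
    _ = -(D' * J - D' * (P * (D * J + E) * P * J)) := by
        rw [conj_mul_add_mul_eq_sub hPP hPDP hPEP hJ hEJ, mul_sub, hD', hD'E]
        abel
    _ = -(D' * (1 - P * (D * J + E) * P) * J) := by noncomm_ring

end Ring

theorem Function.Involutive.preimage_eq_self_of_fixed {S : Type*} {T : Set S} {p : S → S}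
    (hp : Function.Involutive p) (hpT : ∀ i ∈ T, p i = i) : p ⁻¹' T = T := by
  ext i
  refine ⟨fun hi => ?_, fun hi => by simp [Set.mem_preimage, hpT i hi, hi]⟩
  rw [← hp i, hpT (p i) hi]
  exact hi

theorem Set.indicator_comp_of_preimage_eq {S M : Type*} [Zero M] {T : Set S} {p : S → S}
    (h : p ⁻¹' T = T) (f : S → M) : T.indicator (f ∘ p) = T.indicator f ∘ p := by
  ext i
  rw [Function.comp_apply, ← Set.indicator_comp_right, h]

namespace Matrix

variable {S R : Type*} [DecidableEq S]

theorem of_eq_permMatrix_toPerm [Zero R] [One R] {p : S → S} (hp : Function.Involutive p) :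
    (of fun i j => if j = p i then (1 : R) else 0) = (hp.toPerm p).permMatrix R := by
  ext i j
  simp [PEquiv.toMatrix_apply, eq_comm]

theorem permMatrix_toPerm_mul_mul [Fintype S] [NonAssocSemiring R] {p : S → S}
    (hp : Function.Involutive p) (M : Matrix S S R) :
    (hp.toPerm p).permMatrix R * M * (hp.toPerm p).permMatrix R = M.submatrix p p := by
  rw [PEquiv.toMatrix_toPEquiv_mul, PEquiv.mul_toMatrix_toPEquiv, submatrix_submatrix]
  rfl

theorem of_ite_mem_eq_sub_diagonal_indicator [AddGroup R] (T : Set S) (M : Matrix S S R) :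
    (of fun i j => if i = j ∧ i ∈ T then 0 else M i j) = M - diagonal (T.indicator M.diag) := by
  ext i j
  by_cases hij : i = j
  · subst hij
    by_cases hi : i ∈ T <;> simp [hi]
  · simp [hij]

theorem of_ite_mem_eq_sub_diagonal_indicator_one [AddGroupWithOne R] {T : Set S}
    {M : Matrix S S R} (hM : ∀ i ∈ T, M i i = 1) :
    (of fun i j => if i = j ∧ i ∈ T then 0 else M i j) = M - diagonal (T.indicator 1) := by
  rw [of_ite_mem_eq_sub_diagonal_indicator, Set.indicator_congr (f := M.diag) (g := 1) hM]

theorem of_ite_mem_eq_add_diagonal_indicator_one [AddGroupWithOne R] {T : Set S}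
    {M : Matrix S S R} (hM : ∀ i ∈ T, M i i = -1) :
    (of fun i j => if i = j ∧ i ∈ T then 0 else M i j) = M + diagonal (T.indicator 1) := by
  rw [of_ite_mem_eq_sub_diagonal_indicator, Set.indicator_congr (f := M.diag) (g := -1) hM]
  simp [Set.indicator_neg', sub_eq_add_neg]

theorem diagonal_mul_diagonal_indicator_one [Fintype S] [NonAssocSemiring R] {T : Set S}
    {d : S → R} (hd : ∀ i ∈ T, d i = 1) :
    diagonal d * diagonal (T.indicator (1 : S → R)) = diagonal (T.indicator 1) := by
  rw [diagonal_mul_diagonal]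
  congr 1
  ext i
  by_cases hi : i ∈ T <;> simp [hi, hd]

theorem diagonal_indicator_one_mul [Fintype S] [NonAssocRing R] {T : Set S} {M : Matrix S S R}
    (hM : ∀ i ∈ T, M i i = -1 ∧ ∀ j, j ≠ i → M i j = 0) :
    diagonal (T.indicator 1) * M = -diagonal (T.indicator 1) := by
  ext i j
  by_cases hi : i ∈ T
  · by_cases hij : i = j
    · subst hij
      simp [hi, (hM i hi).1]
    · simp [hi, hij, (hM i hi).2 j (Ne.symm hij)]
  · simp [diagonal_apply, hi]

theorem map_diagonal_indicator_one {R' : Type*} [NonAssocSemiring R] [NonAssocSemiring R']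
    (f : R →+* R') (T : Set S) :
    (diagonal (T.indicator (1 : S → R))).map f = diagonal (T.indicator 1) := by
  rw [diagonal_map (map_zero f)]
  congr 1
  ext i
  by_cases hi : i ∈ T <;> simp [hi]

theorem inv_diagonal_of_ne_zero [Fintype S] [Field R] {d : S → R} (hd : ∀ i, d i ≠ 0) :
    (diagonal d)⁻¹ = diagonal d⁻¹ := by
  refine inv_eq_left_inv ?_
  rw [diagonal_mul_diagonal, ← diagonal_one]
  congr 1
  ext i
  exact inv_mul_cancel₀ (hd i)

theorem map_diagonal_eq_inv [Fintype S] [Field R] (f : R →+* R) {d : S → R} (hd : ∀ i, d i ≠ 0)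
    (hf : ∀ i, f (d i) = (d i)⁻¹) : (diagonal d).map f = (diagonal d)⁻¹ := by
  rw [inv_diagonal_of_ne_zero hd, diagonal_map (map_zero f)]
  exact congrArg diagonal (funext hf)

end Matrix

/-- **The key matrix identity:** in the matrix setup, `I - φ(Q) = -D⁻¹·(I - P·Q·P)·J`. -/
theorem matrix_setup_identity
    {F : Type*} [Field F] (φ : F →+* F) {S : Type*} [Fintype S] [DecidableEq S]
    (T : Set S) (p : S → S) (hp : Function.Involutive p) (hpT : ∀ i ∈ T, p i = i)
    (P D J : Matrix S S F)
    (hP : P = Matrix.of fun i j => if j = p i then 1 else 0)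
    (hDdiag : ∀ i j, i ≠ j → D i j = 0)
    (hDunit : ∀ i, IsUnit (D i i))
    (hDT : ∀ i ∈ T, D i i = 1)
    (hDp : ∀ i, D (p i) (p i) = D i i)
    (hDphi : ∀ i, φ (D i i) = (D i i)⁻¹)
    (hJphi : ∀ i j, φ (J i j) = J i j)
    (hJT : ∀ i ∈ T, J i i = -1 ∧ ∀ j, j ≠ i → J i j = 0)
    (hJinv : J * (P * J * P) = 1)
    (D₀ J₀ Q : Matrix S S F)
    (hD₀ : D₀ = Matrix.of fun i j => if i = j ∧ i ∈ T then 0 else D i j)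
    (hJ₀ : J₀ = Matrix.of fun i j => if i = j ∧ i ∈ T then 0 else J i j)
    (hQ : Q = D₀ * J₀)
    :
    1 - Q.map φ = -(D⁻¹ * (1 - P * Q * P) * J) := by
  obtain ⟨d, rfl⟩ : ∃ d, D = diagonal d :=
    ⟨D.diag, (IsDiag.diagonal_diag fun i j h => hDdiag i j h).symm⟩
  simp only [diagonal_apply_eq] at hDunit hDT hDp hDphi
  set E : Matrix S S F := diagonal (T.indicator 1)
  have hconj (M : Matrix S S F) : P * M * P = M.submatrix p p := by
    rw [hP, of_eq_permMatrix_toPerm hp, permMatrix_toPerm_mul_mul hp]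
  have hD₀E : D₀ = diagonal d - E := by
    rw [hD₀, of_ite_mem_eq_sub_diagonal_indicator_one (by simpa using hDT)]
  have hJ₀E : J₀ = J + E := by
    rw [hJ₀, of_ite_mem_eq_add_diagonal_indicator_one fun i hi => (hJT i hi).1]
  have hDE : diagonal d * E = E := diagonal_mul_diagonal_indicator_one hDT
  have hEJ : E * J = -E := diagonal_indicator_one_mul hJT
  have hQE : Q = diagonal d * J + E := by
    rw [hQ, hD₀E, hJ₀E, sub_mul_add_eq_mul_add hDE
      (diagonal_mul_diagonal_indicator_one fun _ hi => Set.indicator_of_mem hi 1) hEJ]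
  rw [hQE, ← RingHom.mapMatrix_apply]
  refine one_sub_map_eq_neg_mul_one_sub_conj_mul _ ?_ ?_ ?_ (mul_eq_one_comm.mp hJinv) ?_ hDE hEJ
    ?_ (map_diagonal_indicator_one φ T) (ext hJphi)
  · simpa [submatrix_one _ hp.injective] using hconj 1
  · rw [hconj, submatrix_diagonal _ _ hp.injective]
    exact congrArg diagonal (funext hDp)
  · rw [hconj, submatrix_diagonal _ _ hp.injective,
      ← Set.indicator_comp_of_preimage_eq (hp.preimage_eq_self_of_fixed hpT), Pi.one_comp]
  · exact nonsing_inv_mul _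
      ((isUnit_iff_isUnit_det _).mp (isUnit_diagonal.mpr (Pi.isUnit_iff.mpr hDunit)))
  · exact map_diagonal_eq_inv φ (fun i => (hDunit i).ne_zero) hDphi
end

section
/- Let M be a deterministic finite automaton over a finite alphabet A with finite state set, and for n ≥ 0 let a_n be the number of words of length n accepted by M. Then the generating function f = ∑_{n ≥ 0} a_n t^n ∈ ℚ⟦t⟧ is rational: there exist polynomials p, q ∈ ℚ[t] with q(0) ≠ 0 such that q·f = p in ℚ⟦t⟧. -/
/-!
Let `c n s` be the number of words of length `n` that lead from the state `s` to an accepting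
state, and let `T` be the transfer matrix of the automaton (`T s t` counts the letters leading
from `s` to `t`). Splitting off the first letter gives `c (n + 1) = T c n`, so
`a n = (Tⁿ c 0) start`. By Cayley–Hamilton these numbers satisfy the linear recurrence whose
coefficients are those of the characteristic polynomial `χ` of `T`; read on generating
functions, this says that `χ.reverse = det (1 - t T)`, whose constant term is `1`, multiplies
`∑ aₙ tⁿ` into a polynomial.
-/

open Polynomial Finset Matrix
open scoped PowerSeries

section PowerSeries

variable {R : Type*} [Semiring R]

theorem PowerSeries.coeff_add_natDegree_reverse_mul_mk (p : R[X]) (a : ℕ → R) (n : ℕ) :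
    coeff (n + p.natDegree) ((p.reverse : R⟦X⟧) * mk a) =
      ∑ i ∈ range (p.natDegree + 1), p.coeff i * a (n + i) := by
  set d := p.natDegree
  have hrev : ∀ j ∈ range (d + 1), p.reverse.coeff j = p.coeff (d - j) := fun j hj => by
    rw [coeff_reverse, revAt_le (Nat.lt_succ_iff.mp (mem_range.mp hj))]
  calc coeff (n + d) ((p.reverse : R⟦X⟧) * mk a)
      = ∑ j ∈ range (n + d + 1), p.reverse.coeff j * a (n + d - j) := by
        simp only [coeff_mul, Polynomial.coeff_coe, coeff_mk]
        exact Nat.sum_antidiagonal_eq_sum_range_succ (fun j k => p.reverse.coeff j * a k) _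
    _ = ∑ j ∈ range (d + 1), p.reverse.coeff j * a (n + d - j) := by
        refine (sum_subset (range_subset_range.mpr (by omega)) fun j _ hj => ?_).symm
        rw [coeff_eq_zero_of_natDegree_lt ((reverse_natDegree_le p).trans_lt
          (by simpa using hj)), zero_mul]
    _ = ∑ j ∈ range (d + 1), p.coeff (d - j) * a (n + (d - j)) := by
        refine sum_congr rfl fun j hj => ?_
        rw [hrev j hj, Nat.add_sub_assoc (Nat.lt_succ_iff.mp (mem_range.mp hj))]
    _ = ∑ i ∈ range (d + 1), p.coeff i * a (n + i) :=
        sum_range_reflect (fun i => p.coeff i * a (n + i)) (d + 1)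

theorem PowerSeries.exists_reverse_mul_mk_eq_of_recurrence (p : R[X]) (a : ℕ → R)
    (ha : ∀ n, ∑ i ∈ range (p.natDegree + 1), p.coeff i * a (n + i) = 0) :
    ∃ r : R[X], (p.reverse : R⟦X⟧) * mk a = r := by
  refine ⟨trunc p.natDegree ((p.reverse : R⟦X⟧) * mk a), ext fun m => ?_⟩
  rw [Polynomial.coeff_coe, coeff_trunc]
  split_ifs with hm
  · rfl
  · obtain ⟨n, rfl⟩ := Nat.exists_eq_add_of_le' (not_lt.mp hm)
    rw [coeff_add_natDegree_reverse_mul_mk, ha]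

end PowerSeries

theorem Polynomial.sum_coeff_mul_map_pow_add_eq_zero {R B : Type*} [CommSemiring R] [Semiring B]
    [Algebra R B] {p : R[X]} {b : B} (hp : aeval b p = 0) (f : B →ₗ[R] R) (n : ℕ) :
    ∑ i ∈ range (p.natDegree + 1), p.coeff i * f (b ^ (n + i)) = 0 := by
  have : ∑ i ∈ range (p.natDegree + 1), p.coeff i • b ^ (n + i) = b ^ n * aeval b p := by
    simp only [aeval_eq_sum_range, mul_sum, mul_smul_comm, pow_add]
  simpa [map_sum, hp] using congrArg f this

theorem Matrix.exists_charpolyRev_mul_mk_mulVec_eq {R S : Type*} [CommRing R] [Fintype S]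
    [DecidableEq S] (T : Matrix S S R) (v : S → R) (i : S) :
    ∃ r : R[X], (T.charpolyRev : R⟦X⟧) * PowerSeries.mk (fun n => (T ^ n *ᵥ v) i) = r := by
  let f : Matrix S S R →ₗ[R] R := LinearMap.proj i ∘ₗ LinearMap.applyₗ v ∘ₗ toLin'.toLinearMap
  rw [← reverse_charpoly]
  exact PowerSeries.exists_reverse_mul_mk_eq_of_recurrence _ (fun n => f (T ^ n))
    (sum_coeff_mul_map_pow_add_eq_zero (aeval_self_charpoly T) f)

namespace Language

variable {A : Type*}

noncomputable def countOfLength (L : Language A) (n : ℕ) : ℕ :=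
  Nat.card {u : List A // u ∈ L ∧ u.length = n}

instance finite_wordsOfLength [Finite A] (L : Language A) (n : ℕ) :
    Finite {u : List A // u ∈ L ∧ u.length = n} :=
  ((List.finite_length_eq A n).subset fun _ hu => hu.2).to_subtype

def wordsOfLengthSuccEquiv (L : Language A) (n : ℕ) :
    {u : List A // u ∈ L ∧ u.length = n + 1} ≃
      Σ x : A, {w : List A // w ∈ L.leftQuotient [x] ∧ w.length = n} where
  toFun
    | ⟨x :: w, hu, hlen⟩ => ⟨x, w, hu, Nat.succ.inj hlen⟩
  invFun | ⟨x, w, hw, hlen⟩ => ⟨x :: w, hw, congrArg Nat.succ hlen⟩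
  left_inv | ⟨_ :: _, _, _⟩ => rfl
  right_inv | ⟨_, _, _, _⟩ => rfl

theorem countOfLength_succ [Fintype A] (L : Language A) (n : ℕ) :
    L.countOfLength (n + 1) = ∑ x, (L.leftQuotient [x]).countOfLength n := by
  rw [countOfLength, Nat.card_congr (L.wordsOfLengthSuccEquiv n), Nat.card_sigma]
  rfl

end Language

namespace DFA

variable {A S : Type*} (M : DFA A S)

theorem leftQuotient_acceptsFrom_singleton (s : S) (x : A) :
    (M.acceptsFrom s).leftQuotient [x] = M.acceptsFrom (M.step s x) :=
  rfl

variable [Fintype A] [Fintype S] [DecidableEq S]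

def transferMatrix (R : Type*) [Semiring R] : Matrix S S R :=
  of fun s t => (#{x | M.step s x = t} : R)

theorem sum_comp_step {R : Type*} [Semiring R] (c : S → R) (s : S) :
    ∑ x, c (M.step s x) = (M.transferMatrix R *ᵥ c) s := by
  simp only [mulVec, dotProduct, transferMatrix, of_apply, ← nsmul_eq_mul, ← sum_const]
  rw [← sum_fiberwise univ (M.step s) (fun x => c (M.step s x))]
  exact sum_congr rfl fun t _ => sum_congr rfl fun x hx => by rw [(mem_filter.mp hx).2]

theorem countOfLength_acceptsFrom {R : Type*} [Semiring R] (n : ℕ) :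
    (fun s => ((M.acceptsFrom s).countOfLength n : R)) =
      M.transferMatrix R ^ n *ᵥ fun s => ((M.acceptsFrom s).countOfLength 0 : R) := by
  induction n with
  | zero => rw [pow_zero, one_mulVec]
  | succ n ih =>
    ext s
    rw [pow_succ', ← mulVec_mulVec, ← ih, ← sum_comp_step, Language.countOfLength_succ]
    simp only [Nat.cast_sum, leftQuotient_acceptsFrom_singleton]

end DFA

/-- **Rationality of the counting generating function of a regular language.** For a DFA
`M` with finite alphabet and finite state set, the generating function
`f = ∑_n a_n tⁿ`, where `a_n` is the number of accepted words of length `n`, is rational: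
`q·f = p` for some polynomials `p, q` with `q(0) ≠ 0`. -/
theorem dfa_generating_function_rational {A S : Type*} [Fintype A] [Fintype S]
    (M : DFA A S) :
    ∃ p q : Polynomial ℚ, q.coeff 0 ≠ 0 ∧
      (q : PowerSeries ℚ) *
        PowerSeries.mk (fun n => (Nat.card {u : List A // u ∈ M.accepts ∧ u.length = n} : ℚ))
        = (p : PowerSeries ℚ) := by
  classical
  set T := M.transferMatrix ℚ
  obtain ⟨p, hp⟩ := T.exists_charpolyRev_mul_mk_mulVec_eq
    (fun s => ((M.acceptsFrom s).countOfLength 0 : ℚ)) M.start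
  refine ⟨p, T.charpolyRev, by simp [coeff_zero_eq_eval_zero], ?_⟩
  rw [← hp]
  congr
  funext n
  exact congrFun (M.countOfLength_acceptsFrom n) M.start
end

section
/- Let Γ be a finite simple graph with vertex set S, and for a nonempty clique σ of Γ let g(σ) ∈ W(Γ) denote the product of the (pairwise commuting) generators in σ. Then every element w ∈ W(Γ) admits a unique factorization w = g(σ₁)·g(σ₂)⋯g(σ_k) (k ≥ 0) into nonempty cliques σ₁,…,σ_k of Γ with the property that for every 1 ≤ i < k, every vertex s ∈ σ_{i+1} satisfies that σ_i ∪ {s} is not a clique of Γ. Moreover, for this factorization ℓ(w) = |σ₁| + |σ₂| + ⋯ + |σ_k|. -/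
open scoped Classical

noncomputable section

/-- The Coxeter matrix of the right-angled Coxeter group `W(Γ)` of a simple graph `Γ`:
`M s s = 1`, `M s t = 2` if `s,t` adjacent, `M s t = 0` (representing `∞`) otherwise. -/
def racgMatrix {S : Type*} (Γ : SimpleGraph S) : CoxeterMatrix S where
  M := fun i j => if i = j then 1 else if Γ.Adj i j then 2 else 0
  isSymm := Matrix.IsSymm.ext fun i j => by
    rcases eq_or_ne i j with rfl | h
    · rfl
    · simp [h, h.symm, Γ.adj_comm]
  diagonal := fun i => by simp
  off_diagonal := fun i j h => by simp only [if_neg h]; split_ifs <;> simp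

/-- The right-angled Coxeter group of a simple graph. -/
abbrev RACG {S : Type*} (Γ : SimpleGraph S) := (racgMatrix Γ).Group

/-- The canonical Coxeter system on `W(Γ)`. -/
def racgCS {S : Type*} (Γ : SimpleGraph S) : CoxeterSystem (racgMatrix Γ) (RACG Γ) :=
  (racgMatrix Γ).toCoxeterSystem

/-- The growth series of `W(Γ)`: the coefficient of `t^n` is the number of elements
of word length `n`. -/
def racgGrowthSeries {S : Type*} (Γ : SimpleGraph S) : PowerSeries ℚ :=
  PowerSeries.mk fun n => (Nat.card {w : RACG Γ // (racgCS Γ).length w = n} : ℚ)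

/-- The clique complex of a finite simple graph, as the finite set of its cliques
(including the empty clique). -/
def cliqueComplex {S : Type*} [Fintype S] [DecidableEq S] (Γ : SimpleGraph S) :
    Finset (Finset S) :=
  Finset.univ.filter fun σ => Γ.IsClique (σ : Set S)

/-- The reduced Euler characteristic `χ̄(K) = -∑_{σ ∈ K} (-1)^{|σ|}` of a finite abstract
simplicial complex (the empty face is included in the sum). -/
def rEuler {V : Type*} (K : Finset (Finset V)) : ℤ :=
  -∑ σ ∈ K, (-1 : ℤ) ^ σ.card

/-- The link of a face `σ` in `K`. -/
def simplicialLink {V : Type*} [DecidableEq V] (K : Finset (Finset V)) (σ : Finset V) :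
    Finset (Finset V) :=
  K.filter fun τ => τ ∩ σ = ∅ ∧ τ ∪ σ ∈ K

/-- `K` is an Eulerian sphere of dimension `m`: every maximal face has `m+1` vertices,
the link of each nonempty face has reduced Euler characteristic `(-1)^(m - |σ|)`, and
`χ̄(K) = (-1)^m`. -/
def IsEulerianSphere {V : Type*} [DecidableEq V] (K : Finset (Finset V)) (m : ℕ) : Prop :=
  (∀ σ ∈ K, (∀ τ ∈ K, σ ⊆ τ → σ = τ) → σ.card = m + 1) ∧
  (∀ σ ∈ K, σ ≠ ∅ →
    ((rEuler (simplicialLink K σ) : ℚ) = (-1 : ℚ) ^ ((m : ℤ) - (σ.card : ℤ)))) ∧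
  (rEuler K : ℚ) = (-1 : ℚ) ^ m


/-- The product `g(σ) ∈ W(Γ)` of the generators in a finset `σ` of vertices (for a clique
`σ`, the generators pairwise commute, so this is independent of the order of
multiplication). -/
def cliqueProd {S : Type*} (Γ : SimpleGraph S) (σ : Finset S) : RACG Γ :=
  (σ.toList.map (racgCS Γ).simple).prod


/-!
The proof is van der Waerden's trick. Right multiplication by a generator `s` is defined directly
on normal forms (`RACG.mulGen`): it preserves normality, is an involution, and commutes with right
multiplication by any generator adjacent to `s`. So it defines an action of `W(Γ)` on normal forms.
Evaluating the normal form obtained by acting on the empty one gives back the group element, and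
acting on the empty form by the value of a normal form rebuilds that normal form clique by clique;
hence evaluation is a bijection from normal forms onto `W(Γ)`. A generator changes the total size
of a normal form by at most one, so a reduced word bounds the size of the normal form by the
length; the reverse inequality is subadditivity of length.
-/

namespace RACG

variable {S : Type*} {Γ : SimpleGraph S}

section CliqueProd

lemma racgMatrix_of_adj {s t : S} (h : Γ.Adj s t) : racgMatrix Γ s t = 2 := by
  simp [racgMatrix, Γ.ne_of_adj h, h]

lemma commute_simple_of_adj {s t : S} (h : Γ.Adj s t) :
    Commute ((racgCS Γ).simple s) ((racgCS Γ).simple t) := by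
  have hst := (racgCS Γ).simple_mul_simple_pow s t
  rw [racgMatrix_of_adj h, sq] at hst
  calc (racgCS Γ).simple s * (racgCS Γ).simple t
      = ((racgCS Γ).simple s * (racgCS Γ).simple t)⁻¹ := eq_inv_of_mul_eq_one_left hst
    _ = (racgCS Γ).simple t * (racgCS Γ).simple s := by simp

lemma commute_simple_cliqueProd {s : S} {σ : Finset S}
    (h : Γ.IsClique (insert s (σ : Set S))) :
    Commute ((racgCS Γ).simple s) (cliqueProd Γ σ) := by
  refine Commute.list_prod_right _ _ fun g hg => ?_
  obtain ⟨y, hy, rfl⟩ := List.mem_map.1 hg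
  rcases eq_or_ne s y with rfl | hsy
  · exact Commute.refl _
  · exact commute_simple_of_adj
      ((SimpleGraph.isClique_insert.1 h).2 y (Finset.mem_toList.1 hy) hsy)

lemma cliqueProd_empty : cliqueProd Γ ∅ = 1 := by
  simp [cliqueProd]

lemma cliqueProd_singleton (s : S) : cliqueProd Γ {s} = (racgCS Γ).simple s := by
  simp [cliqueProd]

lemma length_cliqueProd_le (σ : Finset S) : (racgCS Γ).length (cliqueProd Γ σ) ≤ σ.card :=
  ((racgCS Γ).length_wordProd_le σ.toList).trans_eq σ.length_toList

variable (Γ) in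
def revProd : List (Finset S) → RACG Γ
  | [] => 1
  | τ :: R => revProd R * cliqueProd Γ τ

lemma revProd_reverse (L : List (Finset S)) :
    revProd Γ L.reverse = (L.map (cliqueProd Γ)).prod := by
  suffices ∀ R : List (Finset S), revProd Γ R = (R.reverse.map (cliqueProd Γ)).prod by
    rw [this, List.reverse_reverse]
  intro R
  induction R with
  | nil => rfl
  | cons τ R ih => simp [revProd, ih]

lemma length_revProd_le (R : List (Finset S)) :
    (racgCS Γ).length (revProd Γ R) ≤ (R.map Finset.card).sum := by
  induction R with
  | nil => simp [revProd]
  | cons τ R ih =>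
    rw [List.map_cons, List.sum_cons, add_comm]
    exact ((racgCS Γ).length_mul_le _ _).trans (add_le_add ih (length_cliqueProd_le τ))

variable [DecidableEq S]

lemma cliqueProd_insert {s : S} {σ : Finset S} (hs : s ∉ σ)
    (h : Γ.IsClique (insert s (σ : Set S))) :
    cliqueProd Γ (insert s σ) = cliqueProd Γ σ * (racgCS Γ).simple s := by
  have hcomm : ((insert s σ).toList.map (racgCS Γ).simple).Pairwise Commute := by
    refine List.pairwise_map.2 (List.Pairwise.imp_of_mem ?_ (Finset.nodup_toList _))
    intro a b ha hb hab
    rw [Finset.mem_toList] at ha hb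
    rw [← Finset.coe_insert] at h
    exact commute_simple_of_adj (h ha hb hab)
  rw [cliqueProd, ((Finset.toList_insert hs).map _).prod_eq' hcomm, List.map_cons,
    List.prod_cons, ← cliqueProd]
  exact (commute_simple_cliqueProd h).eq

lemma cliqueProd_mul_self {σ : Finset S} (hσ : Γ.IsClique (σ : Set S)) :
    cliqueProd Γ σ * cliqueProd Γ σ = 1 := by
  induction σ using Finset.induction_on with
  | empty => simp [cliqueProd_empty]
  | @insert s σ hs ih =>
    rw [Finset.coe_insert] at hσ
    rw [cliqueProd_insert hs hσ, (commute_simple_cliqueProd hσ).mul_mul_mul_comm,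
      ih (hσ.subset (Set.subset_insert _ _)), (racgCS Γ).simple_mul_simple_self, one_mul]

lemma cliqueProd_inv {σ : Finset S} (hσ : Γ.IsClique (σ : Set S)) :
    (cliqueProd Γ σ)⁻¹ = cliqueProd Γ σ :=
  inv_eq_of_mul_eq_one_right (cliqueProd_mul_self hσ)

end CliqueProd

section MulGen

lemma isClique_insert_insert {A : Set S} {s t : S} (hs : Γ.IsClique (insert s A))
    (ht : Γ.IsClique (insert t A)) (hst : Γ.Adj s t) : Γ.IsClique (insert s (insert t A)) :=
  ht.insert fun b hb hsb => hb.elim (fun hbt => hbt ▸ hst)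
    fun hb => (SimpleGraph.isClique_insert.1 hs).2 b hb hsb

variable (Γ)

def JoinsHead (s : S) : List (Finset S) → Prop
  | [] => False
  | ρ :: _ => Γ.IsClique (insert s (ρ : Set S))

/-- Normal forms are stored reversed: the list `[σₖ, …, σ₁]` stands for `g(σ₁)⋯g(σₖ)`, so that
right multiplication by a generator acts at the head of the list. -/
def IsNormal : List (Finset S) → Prop
  | [] => True
  | τ :: R => τ ≠ ∅ ∧ Γ.IsClique (τ : Set S) ∧ (∀ x ∈ τ, ¬ JoinsHead Γ x R) ∧ IsNormal R

variable {Γ}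

lemma adj_of_isClique_insert {s x : S} {τ : Finset S} (hs : s ∉ τ)
    (hsτ : Γ.IsClique (insert s (τ : Set S))) (hx : x ∈ τ) : Γ.Adj s x :=
  (SimpleGraph.isClique_insert.1 hsτ).2 x hx (ne_of_mem_of_not_mem hx hs).symm

lemma ne_singleton_of_isNormal {s : S} {τ ρ : Finset S} {R : List (Finset S)}
    (hN : IsNormal Γ (τ :: ρ :: R)) (hs : s ∉ τ) (hsτ : Γ.IsClique (insert s (τ : Set S))) :
    ρ ≠ {s} := by
  obtain ⟨hτne, -, hblock, -⟩ := hN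
  rintro rfl
  obtain ⟨x, hx⟩ := Finset.nonempty_iff_ne_empty.2 hτne
  refine hblock x hx ?_
  show Γ.IsClique (insert x (({s} : Finset S) : Set S))
  rw [Finset.coe_singleton, SimpleGraph.isClique_pair]
  exact fun _ => (adj_of_isClique_insert hs hsτ hx).symm

lemma isClique_insert_singleton {s t : S} (h : Γ.Adj s t) :
    Γ.IsClique (insert s (({t} : Finset S) : Set S)) := by
  rw [Finset.coe_singleton, SimpleGraph.isClique_pair]
  exact fun _ => h

lemma mem_or_isClique_insert_or_not (s : S) (τ : Finset S) :
    s ∈ τ ∨ (s ∉ τ ∧ Γ.IsClique (insert s (τ : Set S))) ∨ ¬ Γ.IsClique (insert s (τ : Set S)) := by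
  tauto

variable [DecidableEq S]

lemma isClique_insert_of_erase_subset {ρ ρ' : Finset S} {s t : S}
    (hρ : Γ.IsClique (ρ : Set S)) (hts : Γ.Adj t s) (hsub : ρ.erase s ⊆ ρ')
    (h : Γ.IsClique (insert t (ρ' : Set S))) : Γ.IsClique (insert t (ρ : Set S)) := by
  refine hρ.insert fun b hb htb => ?_
  rcases eq_or_ne b s with rfl | hbs
  · exact hts
  · exact (SimpleGraph.isClique_insert.1 h).2 b (hsub (Finset.mem_erase.2 ⟨hbs, hb⟩)) htb

lemma erase_ne_empty {s : S} {τ : Finset S} (hs : s ∈ τ) (hτ : τ ≠ {s}) : τ.erase s ≠ ∅ :=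
  fun h => ((Finset.erase_eq_empty_iff τ s).1 h).elim (Finset.ne_empty_of_mem hs) hτ

def consNonempty (σ : Finset S) (R : List (Finset S)) : List (Finset S) :=
  if σ = ∅ then R else σ :: R

lemma consNonempty_empty (R : List (Finset S)) : consNonempty ∅ R = R := if_pos rfl

lemma consNonempty_of_ne {σ : Finset S} (hσ : σ ≠ ∅) (R : List (Finset S)) :
    consNonempty σ R = σ :: R := if_neg hσ

lemma IsNormal.consNonempty_of_subset {σ τ : Finset S} {R : List (Finset S)}
    (h : IsNormal Γ (τ :: R)) (hστ : σ ⊆ τ) : IsNormal Γ (consNonempty σ R) := by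
  obtain ⟨-, hτ, hblock, hR⟩ := h
  by_cases hσ : σ = ∅
  · rwa [hσ, consNonempty_empty]
  · rw [consNonempty_of_ne hσ]
    exact ⟨hσ, hτ.subset (by exact_mod_cast hστ), fun x hx => hblock x (hστ hx), hR⟩

variable (Γ)

/-- Right multiplication of a normal form by the generator `s`: the letter `s` moves from the
last clique towards the first one as long as it commutes with the clique it meets, and then
either cancels against that clique or joins the last clique it passed (a new clique `{s}` if it
passed none). -/
def mulGen (s : S) : List (Finset S) → List (Finset S)
  | [] => [{s}]
  | τ :: R =>
    if s ∈ τ then consNonempty (τ.erase s) R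
    else if Γ.IsClique (insert s (τ : Set S)) then
      if JoinsHead Γ s R then τ :: mulGen s R else insert s τ :: R
    else {s} :: τ :: R

variable {Γ} {s t : S} {τ : Finset S} {R : List (Finset S)}

lemma mulGen_nil : mulGen Γ s [] = [{s}] := rfl

lemma mulGen_cons_of_mem (h : s ∈ τ) : mulGen Γ s (τ :: R) = consNonempty (τ.erase s) R := by
  rw [mulGen, if_pos h]

lemma mulGen_cons_of_joinsHead (hs : s ∉ τ) (hsτ : Γ.IsClique (insert s (τ : Set S)))
    (hj : JoinsHead Γ s R) : mulGen Γ s (τ :: R) = τ :: mulGen Γ s R := by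
  rw [mulGen, if_neg hs, if_pos hsτ, if_pos hj]

lemma mulGen_cons_of_not_joinsHead (hs : s ∉ τ) (hsτ : Γ.IsClique (insert s (τ : Set S)))
    (hj : ¬ JoinsHead Γ s R) : mulGen Γ s (τ :: R) = insert s τ :: R := by
  rw [mulGen, if_neg hs, if_pos hsτ, if_neg hj]

lemma mulGen_cons_of_not_isClique (hτ : Γ.IsClique (τ : Set S))
    (hsτ : ¬ Γ.IsClique (insert s (τ : Set S))) : mulGen Γ s (τ :: R) = {s} :: τ :: R := by
  have hs : s ∉ τ := fun hs => hsτ (by rwa [Set.insert_eq_of_mem (Finset.mem_coe.2 hs)])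
  rw [mulGen, if_neg hs, if_neg hsτ]

lemma exists_mulGen_cons_eq {ρ : Finset S} (hρ : ρ ≠ {t})
    (ht : Γ.IsClique (insert t (ρ : Set S))) :
    ∃ ρ' R', mulGen Γ t (ρ :: R) = ρ' :: R' ∧ ρ.erase t ⊆ ρ' ∧ ρ' ⊆ insert t ρ := by
  by_cases htρ : t ∈ ρ
  · exact ⟨_, _, by rw [mulGen_cons_of_mem htρ, consNonempty_of_ne (erase_ne_empty htρ hρ)],
      subset_rfl, (Finset.erase_subset t ρ).trans (Finset.subset_insert t ρ)⟩
  by_cases hj : JoinsHead Γ t R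
  · exact ⟨_, _, mulGen_cons_of_joinsHead htρ ht hj, Finset.erase_subset t ρ,
      Finset.subset_insert t ρ⟩
  · exact ⟨_, _, mulGen_cons_of_not_joinsHead htρ ht hj,
      (Finset.erase_subset t ρ).trans (Finset.subset_insert t ρ), subset_rfl⟩

lemma joinsHead_mulGen_self (hN : IsNormal Γ (τ :: R)) (hs : s ∉ τ)
    (hsτ : Γ.IsClique (insert s (τ : Set S))) (hj : JoinsHead Γ s R) :
    JoinsHead Γ s (mulGen Γ s R) := by
  obtain _ | ⟨ρ, R⟩ := R
  · exact hj.elim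
  obtain ⟨ρ', R', he, -, hsub⟩ := exists_mulGen_cons_eq (ne_singleton_of_isNormal hN hs hsτ) hj
  rw [he]
  have hsub' : (ρ' : Set S) ⊆ insert s (ρ : Set S) := by exact_mod_cast hsub
  exact hj.subset (Set.insert_subset_iff.2 ⟨Set.mem_insert s _, hsub'⟩)

lemma joinsHead_mulGen_iff (hN : IsNormal Γ (τ :: R)) (ht : t ∉ τ)
    (htτ : Γ.IsClique (insert t (τ : Set S))) (hj : JoinsHead Γ t R) (hst : Γ.Adj s t) :
    JoinsHead Γ s (mulGen Γ t R) ↔ JoinsHead Γ s R := by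
  obtain _ | ⟨ρ, R⟩ := R
  · exact hj.elim
  obtain ⟨ρ', R', he, hsub, hsub'⟩ := exists_mulGen_cons_eq (ne_singleton_of_isNormal hN ht htτ) hj
  have hρ : Γ.IsClique (ρ : Set S) := hN.2.2.2.2.1
  have hsub'' : (ρ' : Set S) ⊆ insert t (ρ : Set S) := by exact_mod_cast hsub'
  rw [he]
  exact ⟨isClique_insert_of_erase_subset hρ hst hsub,
    fun hs => (isClique_insert_insert hs hj hst).subset (Set.insert_subset_insert hsub'')⟩

theorem IsNormal.mulGen (hN : IsNormal Γ R) (s : S) : IsNormal Γ (mulGen Γ s R) := by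
  induction R using mulGen.induct Γ s with
  | case1 => exact ⟨Finset.singleton_ne_empty s, by simp, fun _ _ h => h, trivial⟩
  | case2 τ R hs =>
    rw [mulGen_cons_of_mem hs]
    exact hN.consNonempty_of_subset (Finset.erase_subset s τ)
  | case3 τ R hs hsτ hj ih =>
    rw [mulGen_cons_of_joinsHead hs hsτ hj]
    obtain ⟨hτne, hτ, hblock, hR⟩ := id hN
    refine ⟨hτne, hτ, fun x hx hx' => hblock x hx ?_, ih hR⟩
    exact (joinsHead_mulGen_iff hN hs hsτ hj (adj_of_isClique_insert hs hsτ hx).symm).1 hx'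
  | case4 τ R hs hsτ hj =>
    obtain ⟨-, -, hblock, hR⟩ := hN
    rw [mulGen_cons_of_not_joinsHead hs hsτ hj]
    refine ⟨Finset.insert_ne_empty s τ, by rwa [Finset.coe_insert], fun x hx => ?_, hR⟩
    rcases Finset.mem_insert.1 hx with rfl | hx
    · exact hj
    · exact hblock x hx
  | case5 τ R hs hsτ =>
    rw [mulGen_cons_of_not_isClique hN.2.1 hsτ]
    exact ⟨Finset.singleton_ne_empty s, by simp, fun x hx => Finset.mem_singleton.1 hx ▸ hsτ, hN⟩

lemma mulGen_consNonempty {σ : Finset S} (hR : IsNormal Γ R) (hs : s ∉ σ)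
    (hsσ : Γ.IsClique (insert s (σ : Set S))) (hj : ¬ JoinsHead Γ s R) :
    mulGen Γ s (consNonempty σ R) = insert s σ :: R := by
  by_cases hσ : σ = ∅
  · subst hσ
    rw [consNonempty_empty, Finset.insert_empty]
    cases R with
    | nil => rfl
    | cons ρ R => exact mulGen_cons_of_not_isClique hR.2.1 hj
  · rw [consNonempty_of_ne hσ, mulGen_cons_of_not_joinsHead hs hsσ hj]

theorem mulGen_mulGen (hN : IsNormal Γ R) (s : S) : mulGen Γ s (mulGen Γ s R) = R := by
  induction R using mulGen.induct Γ s with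
  | case1 =>
    rw [mulGen_nil, mulGen_cons_of_mem (Finset.mem_singleton_self s), Finset.erase_singleton,
      consNonempty_empty]
  | case2 τ R hs =>
    obtain ⟨-, hτ, hblock, hR⟩ := hN
    have hsτ : Γ.IsClique (insert s ((τ.erase s : Finset S) : Set S)) := by
      rwa [← Finset.coe_insert, Finset.insert_erase hs]
    rw [mulGen_cons_of_mem hs, mulGen_consNonempty hR (Finset.notMem_erase s τ) hsτ (hblock s hs),
      Finset.insert_erase hs]
  | case3 τ R hs hsτ hj ih =>
    rw [mulGen_cons_of_joinsHead hs hsτ hj,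
      mulGen_cons_of_joinsHead hs hsτ (joinsHead_mulGen_self hN hs hsτ hj), ih hN.2.2.2]
  | case4 τ R hs hsτ hj =>
    rw [mulGen_cons_of_not_joinsHead hs hsτ hj, mulGen_cons_of_mem (Finset.mem_insert_self s τ),
      Finset.erase_insert hs, consNonempty_of_ne hN.1]
  | case5 τ R hs hsτ =>
    rw [mulGen_cons_of_not_isClique hN.2.1 hsτ, mulGen_cons_of_mem (Finset.mem_singleton_self s),
      Finset.erase_singleton, consNonempty_empty]

lemma mulGen_comm_of_mem_of_mem (hst : s ≠ t) (hs : s ∈ τ) (ht : t ∈ τ) :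
    mulGen Γ s (mulGen Γ t (τ :: R)) = mulGen Γ t (mulGen Γ s (τ :: R)) := by
  have hs' : s ∈ τ.erase t := Finset.mem_erase.2 ⟨hst, hs⟩
  have ht' : t ∈ τ.erase s := Finset.mem_erase.2 ⟨hst.symm, ht⟩
  rw [mulGen_cons_of_mem ht, consNonempty_of_ne (Finset.ne_empty_of_mem hs'),
    mulGen_cons_of_mem hs', mulGen_cons_of_mem hs,
    consNonempty_of_ne (Finset.ne_empty_of_mem ht'), mulGen_cons_of_mem ht',
    Finset.erase_right_comm]

lemma mulGen_comm_of_mem_of_isClique (hR : IsNormal Γ R) (hst : s ≠ t) (hs : s ∈ τ)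
    (ht : t ∉ τ) (htτ : Γ.IsClique (insert t (τ : Set S))) :
    mulGen Γ s (mulGen Γ t (τ :: R)) = mulGen Γ t (mulGen Γ s (τ :: R)) := by
  have ht' : t ∉ τ.erase s := fun h => ht (Finset.mem_of_mem_erase h)
  have htτ' : Γ.IsClique (insert t ((τ.erase s : Finset S) : Set S)) :=
    htτ.subset (Set.insert_subset_insert (Finset.coe_subset.2 (Finset.erase_subset s τ)))
  rw [mulGen_cons_of_mem hs]
  by_cases hj : JoinsHead Γ t R
  · rw [mulGen_cons_of_joinsHead ht htτ hj, mulGen_cons_of_mem hs]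
    by_cases he : τ.erase s = ∅
    · rw [he, consNonempty_empty, consNonempty_empty]
    · rw [consNonempty_of_ne he, consNonempty_of_ne he, mulGen_cons_of_joinsHead ht' htτ' hj]
  · rw [mulGen_cons_of_not_joinsHead ht htτ hj, mulGen_cons_of_mem (Finset.mem_insert_of_mem hs),
      Finset.erase_insert_of_ne hst.symm, consNonempty_of_ne (Finset.insert_ne_empty _ _),
      mulGen_consNonempty hR ht' htτ' hj]

lemma mulGen_comm_of_mem_of_not_isClique (hst : Γ.Adj s t) (hτ : Γ.IsClique (τ : Set S))
    (hs : s ∈ τ) (htτ : ¬ Γ.IsClique (insert t (τ : Set S))) :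
    mulGen Γ s (mulGen Γ t (τ :: R)) = mulGen Γ t (mulGen Γ s (τ :: R)) := by
  have he : τ.erase s ≠ ∅ := erase_ne_empty hs fun h => htτ (h ▸ isClique_insert_singleton hst.symm)
  have htτ' : ¬ Γ.IsClique (insert t ((τ.erase s : Finset S) : Set S)) :=
    fun h => htτ (isClique_insert_of_erase_subset hτ hst.symm subset_rfl h)
  have hj : JoinsHead Γ s (τ :: R) := by
    rwa [JoinsHead, Set.insert_eq_of_mem (Finset.mem_coe.2 hs)]
  rw [mulGen_cons_of_not_isClique hτ htτ,
    mulGen_cons_of_joinsHead (Finset.notMem_singleton.2 hst.ne) (isClique_insert_singleton hst) hj,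
    mulGen_cons_of_mem hs, consNonempty_of_ne he,
    mulGen_cons_of_not_isClique (hτ.subset (Finset.coe_subset.2 (Finset.erase_subset s τ))) htτ']

lemma mulGen_comm_of_isClique_of_isClique (hN : IsNormal Γ (τ :: R)) (hst : Γ.Adj s t)
    (hs : s ∉ τ) (hsτ : Γ.IsClique (insert s (τ : Set S)))
    (ht : t ∉ τ) (htτ : Γ.IsClique (insert t (τ : Set S)))
    (ih : mulGen Γ s (mulGen Γ t R) = mulGen Γ t (mulGen Γ s R)) :
    mulGen Γ s (mulGen Γ t (τ :: R)) = mulGen Γ t (mulGen Γ s (τ :: R)) := by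
  have hs' : s ∉ insert t τ := by simp [hs, hst.ne]
  have ht' : t ∉ insert s τ := by simp [ht, hst.ne.symm]
  have hstτ : Γ.IsClique (insert s ((insert t τ : Finset S) : Set S)) := by
    rw [Finset.coe_insert]; exact isClique_insert_insert hsτ htτ hst
  have htsτ : Γ.IsClique (insert t ((insert s τ : Finset S) : Set S)) := by
    rw [Finset.coe_insert]; exact isClique_insert_insert htτ hsτ hst.symm
  have hjs_iff := fun hjt => joinsHead_mulGen_iff hN ht htτ hjt hst
  have hjt_iff := fun hjs => joinsHead_mulGen_iff hN hs hsτ hjs hst.symm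
  by_cases hjs : JoinsHead Γ s R <;> by_cases hjt : JoinsHead Γ t R
  · rw [mulGen_cons_of_joinsHead ht htτ hjt,
      mulGen_cons_of_joinsHead hs hsτ ((hjs_iff hjt).2 hjs), mulGen_cons_of_joinsHead hs hsτ hjs,
      mulGen_cons_of_joinsHead ht htτ ((hjt_iff hjs).2 hjt), ih]
  · rw [mulGen_cons_of_not_joinsHead ht htτ hjt, mulGen_cons_of_joinsHead hs' hstτ hjs,
      mulGen_cons_of_joinsHead hs hsτ hjs,
      mulGen_cons_of_not_joinsHead ht htτ (mt (hjt_iff hjs).1 hjt)]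
  · rw [mulGen_cons_of_joinsHead ht htτ hjt,
      mulGen_cons_of_not_joinsHead hs hsτ (mt (hjs_iff hjt).1 hjs),
      mulGen_cons_of_not_joinsHead hs hsτ hjs, mulGen_cons_of_joinsHead ht' htsτ hjt]
  · rw [mulGen_cons_of_not_joinsHead ht htτ hjt, mulGen_cons_of_not_joinsHead hs' hstτ hjs,
      mulGen_cons_of_not_joinsHead hs hsτ hjs, mulGen_cons_of_not_joinsHead ht' htsτ hjt,
      Finset.insert_comm]

lemma mulGen_comm_of_isClique_of_not_isClique (hst : Γ.Adj s t) (hτ : Γ.IsClique (τ : Set S))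
    (hs : s ∉ τ) (hsτ : Γ.IsClique (insert s (τ : Set S)))
    (htτ : ¬ Γ.IsClique (insert t (τ : Set S))) :
    mulGen Γ s (mulGen Γ t (τ :: R)) = mulGen Γ t (mulGen Γ s (τ :: R)) := by
  obtain ⟨τ', R', he, hsub, hsub'⟩ :=
    exists_mulGen_cons_eq (R := R) (fun h => by simp [h] at hs) hsτ
  have hτ' : Γ.IsClique (τ' : Set S) := by
    rw [← Finset.coe_insert] at hsτ; exact hsτ.subset (Finset.coe_subset.2 hsub')
  have htτ' : ¬ Γ.IsClique (insert t (τ' : Set S)) :=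
    fun h => htτ (isClique_insert_of_erase_subset hτ hst.symm hsub h)
  rw [mulGen_cons_of_not_isClique hτ htτ,
    mulGen_cons_of_joinsHead (R := τ :: R) (Finset.notMem_singleton.2 hst.ne)
      (isClique_insert_singleton hst) hsτ, he, mulGen_cons_of_not_isClique hτ' htτ']

lemma mulGen_comm_of_not_isClique (hst : Γ.Adj s t) (hτ : Γ.IsClique (τ : Set S))
    (hsτ : ¬ Γ.IsClique (insert s (τ : Set S))) (htτ : ¬ Γ.IsClique (insert t (τ : Set S))) :
    mulGen Γ s (mulGen Γ t (τ :: R)) = mulGen Γ t (mulGen Γ s (τ :: R)) := by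
  rw [mulGen_cons_of_not_isClique hτ htτ, mulGen_cons_of_not_isClique hτ hsτ,
    mulGen_cons_of_not_joinsHead (R := τ :: R) (Finset.notMem_singleton.2 hst.ne)
      (isClique_insert_singleton hst) hsτ,
    mulGen_cons_of_not_joinsHead (R := τ :: R) (Finset.notMem_singleton.2 hst.ne.symm)
      (isClique_insert_singleton hst.symm) htτ, Finset.pair_comm]

theorem mulGen_comm (hst : Γ.Adj s t) (hN : IsNormal Γ R) :
    mulGen Γ s (mulGen Γ t R) = mulGen Γ t (mulGen Γ s R) := by
  induction R with
  | nil =>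
    rw [mulGen_nil, mulGen_nil,
      mulGen_cons_of_not_joinsHead (Finset.notMem_singleton.2 hst.ne)
        (isClique_insert_singleton hst) id,
      mulGen_cons_of_not_joinsHead (Finset.notMem_singleton.2 hst.ne.symm)
        (isClique_insert_singleton hst.symm) id, Finset.pair_comm]
  | cons τ R ih =>
    have hτ : Γ.IsClique (τ : Set S) := hN.2.1
    obtain hs | ⟨hs, hsτ⟩ | hsτ := mem_or_isClique_insert_or_not (Γ := Γ) s τ <;>
    obtain ht | ⟨ht, htτ⟩ | htτ := mem_or_isClique_insert_or_not (Γ := Γ) t τ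
    · exact mulGen_comm_of_mem_of_mem hst.ne hs ht
    · exact mulGen_comm_of_mem_of_isClique hN.2.2.2 hst.ne hs ht htτ
    · exact mulGen_comm_of_mem_of_not_isClique hst hτ hs htτ
    · exact (mulGen_comm_of_mem_of_isClique hN.2.2.2 hst.ne.symm ht hs hsτ).symm
    · exact mulGen_comm_of_isClique_of_isClique hN hst hs hsτ ht htτ (ih hN.2.2.2)
    · exact mulGen_comm_of_isClique_of_not_isClique hst hτ hs hsτ htτ
    · exact (mulGen_comm_of_mem_of_not_isClique hst.symm hτ ht hsτ).symm
    · exact (mulGen_comm_of_isClique_of_not_isClique hst.symm hτ ht htτ hsτ).symm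
    · exact mulGen_comm_of_not_isClique hst hτ hsτ htτ

end MulGen

section Action

variable [DecidableEq S]

lemma revProd_consNonempty (σ : Finset S) (R : List (Finset S)) :
    revProd Γ (consNonempty σ R) = revProd Γ R * cliqueProd Γ σ := by
  by_cases hσ : σ = ∅
  · rw [hσ, consNonempty_empty, cliqueProd_empty, mul_one]
  · rw [consNonempty_of_ne hσ, revProd]

lemma sum_card_consNonempty (σ : Finset S) (R : List (Finset S)) :
    ((consNonempty σ R).map Finset.card).sum = σ.card + (R.map Finset.card).sum := by
  by_cases hσ : σ = ∅
  · rw [hσ, consNonempty_empty, Finset.card_empty, zero_add]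
  · rw [consNonempty_of_ne hσ, List.map_cons, List.sum_cons]

lemma revProd_mulGen {R : List (Finset S)} (hN : IsNormal Γ R) (s : S) :
    revProd Γ (mulGen Γ s R) = revProd Γ R * (racgCS Γ).simple s := by
  induction R using mulGen.induct Γ s with
  | case1 => rw [mulGen_nil, revProd, revProd, revProd, cliqueProd_singleton]
  | case2 τ R hs =>
    have hsτ : Γ.IsClique (insert s ((τ.erase s : Finset S) : Set S)) := by
      rw [← Finset.coe_insert, Finset.insert_erase hs]; exact hN.2.1
    rw [mulGen_cons_of_mem hs, revProd_consNonempty, revProd, mul_assoc,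
      ← Finset.insert_erase hs, cliqueProd_insert (Finset.notMem_erase s τ) hsτ,
      Finset.insert_erase hs, mul_assoc, (racgCS Γ).simple_mul_simple_self, mul_one]
  | case3 τ R hs hsτ hj ih =>
    rw [mulGen_cons_of_joinsHead hs hsτ hj, revProd, ih hN.2.2.2, revProd, mul_assoc, mul_assoc,
      (commute_simple_cliqueProd hsτ).eq]
  | case4 τ R hs hsτ hj =>
    rw [mulGen_cons_of_not_joinsHead hs hsτ hj, revProd, revProd, cliqueProd_insert hs hsτ,
      mul_assoc]
  | case5 τ R hs hsτ =>
    rw [mulGen_cons_of_not_isClique hN.2.1 hsτ, revProd, cliqueProd_singleton]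

lemma sum_card_mulGen_le (s : S) (R : List (Finset S)) :
    ((mulGen Γ s R).map Finset.card).sum ≤ (R.map Finset.card).sum + 1 := by
  induction R using mulGen.induct Γ s with
  | case1 => simp [mulGen_nil]
  | case2 τ R hs =>
    rw [mulGen_cons_of_mem hs, sum_card_consNonempty, List.map_cons, List.sum_cons]
    have := Finset.card_erase_le (a := s) (s := τ)
    omega
  | case3 τ R hs hsτ hj ih =>
    rw [mulGen_cons_of_joinsHead hs hsτ hj, List.map_cons, List.sum_cons, List.map_cons,
      List.sum_cons]
    omega
  | case4 τ R hs hsτ hj =>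
    rw [mulGen_cons_of_not_joinsHead hs hsτ hj, List.map_cons, List.sum_cons, List.map_cons,
      List.sum_cons, Finset.card_insert_of_notMem hs]
    omega
  | case5 τ R hs hsτ =>
    rw [mulGen, if_neg hs, if_neg hsτ]
    simp only [List.map_cons, List.sum_cons, Finset.card_singleton]
    omega

variable (Γ)

abbrev NormalList := {R : List (Finset S) // IsNormal Γ R}

def mulGenPerm (s : S) : Equiv.Perm (NormalList Γ) :=
  Function.Involutive.toPerm (fun R => ⟨mulGen Γ s R.1, R.2.mulGen s⟩)
    fun R => Subtype.ext (mulGen_mulGen R.2 s)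

lemma isLiftable_mulGenPerm : (racgMatrix Γ).IsLiftable (mulGenPerm Γ) := by
  intro s t
  rcases eq_or_ne s t with rfl | hst
  · rw [(racgMatrix Γ).diagonal, pow_one]
    exact Equiv.ext fun R => Subtype.ext (mulGen_mulGen R.2 s)
  by_cases hadj : Γ.Adj s t
  · rw [racgMatrix_of_adj hadj, sq]
    refine Equiv.ext fun R => Subtype.ext ?_
    show mulGen Γ s (mulGen Γ t (mulGen Γ s (mulGen Γ t R.1))) = R.1
    rw [mulGen_comm hadj.symm (R.2.mulGen t), mulGen_mulGen R.2 t, mulGen_mulGen R.2 s]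
  · have : racgMatrix Γ s t = 0 := by simp [racgMatrix, hst, hadj]
    rw [this, pow_zero]

def action : RACG Γ →* Equiv.Perm (NormalList Γ) :=
  (racgCS Γ).lift ⟨mulGenPerm Γ, isLiftable_mulGenPerm Γ⟩

def normalForm (w : RACG Γ) : NormalList Γ :=
  action Γ w⁻¹ ⟨[], trivial⟩

variable {Γ}

lemma action_simple (s : S) : action Γ ((racgCS Γ).simple s) = mulGenPerm Γ s :=
  (racgCS Γ).lift_apply_simple (isLiftable_mulGenPerm Γ) s

lemma revProd_action_inv (w : RACG Γ) (R : NormalList Γ) :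
    revProd Γ (action Γ w⁻¹ R).1 = revProd Γ R.1 * w := by
  induction w using (racgCS Γ).simple_induction_left generalizing R with
  | one => rw [inv_one, map_one, mul_one]; rfl
  | mul_simple_left w s ih =>
    rw [mul_inv_rev, (racgCS Γ).inv_simple, map_mul, Equiv.Perm.mul_apply, action_simple, ih,
      ← mul_assoc]
    exact congrArg (· * w) (revProd_mulGen R.2 s)

lemma revProd_normalForm (w : RACG Γ) : revProd Γ (normalForm Γ w).1 = w := by
  rw [normalForm, revProd_action_inv, revProd, one_mul]

lemma normalForm_mul_simple (w : RACG Γ) (s : S) :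
    (normalForm Γ (w * (racgCS Γ).simple s)).1 = mulGen Γ s (normalForm Γ w).1 := by
  rw [normalForm, mul_inv_rev, (racgCS Γ).inv_simple, map_mul, Equiv.Perm.mul_apply,
    action_simple]
  rfl

lemma action_cliqueProd {σ : Finset S} (R : NormalList Γ) (hσ : Γ.IsClique (σ : Set S))
    (hblock : ∀ x ∈ σ, ¬ JoinsHead Γ x R.1) :
    (action Γ (cliqueProd Γ σ) R).1 = consNonempty σ R.1 := by
  induction σ using Finset.induction_on with
  | empty => rw [cliqueProd_empty, map_one, consNonempty_empty]; rfl
  | @insert x σ hx ih =>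
    rw [Finset.coe_insert] at hσ
    rw [cliqueProd_insert hx hσ, ← (commute_simple_cliqueProd hσ).eq, map_mul,
      Equiv.Perm.mul_apply, action_simple]
    change mulGen Γ x (action Γ (cliqueProd Γ σ) R).1 = _
    rw [ih (hσ.subset (Set.subset_insert x _)) fun y hy => hblock y (Finset.mem_insert_of_mem hy),
      mulGen_consNonempty R.2 hx hσ (hblock x (Finset.mem_insert_self x σ)),
      consNonempty_of_ne (Finset.insert_ne_empty x σ)]

lemma normalForm_revProd {R : List (Finset S)} (hR : IsNormal Γ R) :
    (normalForm Γ (revProd Γ R)).1 = R := by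
  induction R with
  | nil => rw [revProd, normalForm, inv_one, map_one]; rfl
  | cons τ R ih =>
    obtain ⟨hτne, hτ, hblock, hR⟩ := hR
    have hnf : action Γ (revProd Γ R)⁻¹ ⟨[], trivial⟩ = ⟨R, hR⟩ := Subtype.ext (ih hR)
    rw [normalForm, revProd, mul_inv_rev, cliqueProd_inv hτ, map_mul, Equiv.Perm.mul_apply, hnf,
      action_cliqueProd _ hτ hblock, consNonempty_of_ne hτne]

lemma sum_card_normalForm_wordProd_le (ω : List S) :
    ((normalForm Γ ((racgCS Γ).wordProd ω)).1.map Finset.card).sum ≤ ω.length := by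
  induction ω using List.reverseRecOn with
  | nil => rw [CoxeterSystem.wordProd_nil, normalForm, inv_one, map_one]; rfl
  | append_singleton ω s ih =>
    rw [CoxeterSystem.wordProd_append, CoxeterSystem.wordProd_singleton, normalForm_mul_simple,
      List.length_append, List.length_singleton]
    exact (sum_card_mulGen_le s _).trans (Nat.add_le_add_right ih 1)

lemma length_revProd {R : List (Finset S)} (hR : IsNormal Γ R) :
    (racgCS Γ).length (revProd Γ R) = (R.map Finset.card).sum := by
  refine (length_revProd_le R).antisymm ?_
  obtain ⟨ω, hω, hw⟩ := (racgCS Γ).exists_isReduced (revProd Γ R)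
  calc (R.map Finset.card).sum
      = ((normalForm Γ ((racgCS Γ).wordProd ω)).1.map Finset.card).sum := by
        rw [← hw, normalForm_revProd hR]
    _ ≤ ω.length := sum_card_normalForm_wordProd_le ω
    _ = (racgCS Γ).length (revProd Γ R) := by rw [hw, hω.eq]

lemma isNormal_iff (R : List (Finset S)) :
    IsNormal Γ R ↔ (∀ σ ∈ R, σ ≠ ∅ ∧ Γ.IsClique (σ : Set S)) ∧
      R.IsChain (fun τ ρ : Finset S => ∀ x ∈ τ, ¬ Γ.IsClique (insert x (ρ : Set S))) := by
  induction R with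
  | nil => simp [IsNormal]
  | cons τ R ih =>
    have hhead : (∀ x ∈ τ, ¬ JoinsHead Γ x R) ↔
        ∀ ρ ∈ R.head?, ∀ x ∈ τ, ¬ Γ.IsClique (insert x (ρ : Set S)) := by
      cases R <;> simp [JoinsHead]
    rw [IsNormal, ih, hhead, List.forall_mem_cons, List.isChain_cons]
    tauto

lemma isNormal_reverse_iff (L : List (Finset S)) :
    IsNormal Γ L.reverse ↔ (∀ σ ∈ L, σ ≠ ∅ ∧ Γ.IsClique (σ : Set S)) ∧
      L.IsChain fun σ τ : Finset S => ∀ s ∈ τ, ¬ Γ.IsClique ((insert s σ : Finset S) : Set S) := by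
  simp only [isNormal_iff, List.isChain_reverse, List.mem_reverse, Finset.coe_insert]

theorem isNormal_and_revProd_eq_iff {R : List (Finset S)} {w : RACG Γ} :
    IsNormal Γ R ∧ revProd Γ R = w ↔ R = (normalForm Γ w).1 := by
  constructor
  · rintro ⟨hR, rfl⟩
    exact (normalForm_revProd hR).symm
  · rintro rfl
    exact ⟨(normalForm Γ w).2, revProd_normalForm w⟩

end Action

end RACG

theorem racg_unique_clique_factorization_general {S : Type*} [DecidableEq S]
    (Γ : SimpleGraph S) (w : RACG Γ) :
    (∃! L : List (Finset S),
      (∀ σ ∈ L, σ ≠ ∅ ∧ Γ.IsClique (σ : Set S)) ∧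
      List.Chain' (fun σ τ => ∀ s ∈ τ, ¬ Γ.IsClique ((insert s σ : Finset S) : Set S)) L ∧
      (L.map (cliqueProd Γ)).prod = w) ∧
    (∀ L : List (Finset S),
      (∀ σ ∈ L, σ ≠ ∅ ∧ Γ.IsClique (σ : Set S)) →
      List.Chain' (fun σ τ => ∀ s ∈ τ, ¬ Γ.IsClique ((insert s σ : Finset S) : Set S)) L →
      (L.map (cliqueProd Γ)).prod = w →
      (racgCS Γ).length w = (L.map Finset.card).sum) := by
  have key : ∀ L : List (Finset S), ((∀ σ ∈ L, σ ≠ ∅ ∧ Γ.IsClique (σ : Set S)) ∧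
      L.IsChain (fun σ τ => ∀ s ∈ τ, ¬ Γ.IsClique ((insert s σ : Finset S) : Set S)) ∧
      (L.map (cliqueProd Γ)).prod = w) ↔ L = (RACG.normalForm Γ w).1.reverse := fun L => by
    rw [← RACG.revProd_reverse, ← List.reverse_eq_iff, ← RACG.isNormal_and_revProd_eq_iff,
      ← and_assoc]
    exact and_congr_left' (RACG.isNormal_reverse_iff L).symm
  refine ⟨⟨_, (key _).2 rfl, fun L hL => (key L).1 hL⟩, fun L h1 h2 h3 => ?_⟩
  rw [(key L).1 ⟨h1, h2, h3⟩, List.map_reverse, List.sum_reverse,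
    ← RACG.length_revProd (RACG.normalForm Γ w).2, RACG.revProd_normalForm]

/-- **Unique normal (clique) factorization in right-angled Coxeter groups.** Every
`w ∈ W(Γ)` has a unique factorization `w = g(σ₁)⋯g(σ_k)` into nonempty cliques such that
for consecutive cliques, no vertex `s ∈ σ_{i+1}` has `σ_i ∪ {s}` a clique; moreover
`ℓ(w) = |σ₁| + ⋯ + |σ_k|` for this factorization. -/
theorem racg_unique_clique_factorization {S : Type*} [Fintype S] [DecidableEq S]
    (Γ : SimpleGraph S) (w : RACG Γ) :
    (∃! L : List (Finset S),
      (∀ σ ∈ L, σ ≠ ∅ ∧ Γ.IsClique (σ : Set S)) ∧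
      List.Chain' (fun σ τ => ∀ s ∈ τ, ¬ Γ.IsClique ((insert s σ : Finset S) : Set S)) L ∧
      (L.map (cliqueProd Γ)).prod = w) ∧
    (∀ L : List (Finset S),
      (∀ σ ∈ L, σ ≠ ∅ ∧ Γ.IsClique (σ : Set S)) →
      List.Chain' (fun σ τ => ∀ s ∈ τ, ¬ Γ.IsClique ((insert s σ : Finset S) : Set S)) L →
      (L.map (cliqueProd Γ)).prod = w →
      (racgCS Γ).length w = (L.map Finset.card).sum) :=
  racg_unique_clique_factorization_general Γ w
end
end
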